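/- Let F : (0,∞)² → ℂ be continuous with compact support contained in (0,∞)². Let m1, m2, n1, n2, c1, c2 be positive integers, and set A1 := √(m1·n1·c2)/c1 and A2 := √(m2·n2)·c1/c2. Then m1^{−2}·m2^{−3/2}·n1^{−2}·n2^{−3/2} · ∫₀^∞ ∫₀^∞ [ y1⁴·y2³ ∫_{ℝ⁴} e(m1·c2·ζ1/(c1²·ξ2·y1)) · e(m2·c1²·ζ2/(c2²·ξ1·y2)) · e(−n1·x1·y1 − n2·x5·y2) · F(m1·c2·√ξ1/(c1²·ξ2·y1), m2·c1²·ξ2/(c2²·ξ1·y2)) dx1 dx2 dx4 dx5 ] · conj(F(n1·y1, n2·y2)) · y1^{−4}·y2^{−3} · (dy1 dy2)/(y1·y2) = (c1·c2)^{−1} · 𝒥_{w0,F}(A1, A2). -/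

import Mathlib

open MeasureTheory

noncomputable section

/-- `e(x) = exp(2πix)`. -/
def e (x : ℝ) : ℂ := Complex.exp (2 * Real.pi * Complex.I * (x : ℂ))

/-- `ξ_{w0,1}` in coordinates `(x1, x2, x4, x5)`. -/
def ξw1 (x1 x2 x4 x5 : ℝ) : ℝ :=
  (x4 ^ 2 + x1 * x4 * x5 - x2 * x5) ^ 2 + (x1 * x4 - x2) ^ 2 + 2 * x4 ^ 2 + x5 ^ 2 + 1

/-- `ξ_{w0,2}`. -/
def ξw2 (x1 x2 x4 x5 : ℝ) : ℝ := (x1 * x5 + x4) ^ 2 + x1 ^ 2 + x2 ^ 2 + 1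

/-- `ζ_{w0,1}`. -/
def ζw1 (x1 x2 x4 x5 : ℝ) : ℝ := -(x1 * x5 ^ 2 + x2 * x4 + x4 * x5 + x1)

/-- `ζ_{w0,2}`. -/
def ζw2 (x1 x2 x4 x5 : ℝ) : ℝ :=
  x1 ^ 3 * x4 * x5 ^ 2 + 2 * x1 ^ 2 * x4 ^ 2 * x5 - x1 ^ 2 * x2 * x5 ^ 2 +
    x1 ^ 3 * x4 + x1 * x4 ^ 3 - x1 ^ 2 * x2 + x2 * x4 ^ 2 - x2 ^ 2 * x5 +
    2 * x1 * x4 - x5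

/-- The integrand of the inner `ℝ⁴`-integral of `𝒥_{w0,F}`. -/
def Jw0Integrand (F : ℝ → ℝ → ℂ) (A1 A2 y1 y2 x1 x2 x4 x5 : ℝ) : ℂ :=
  e (A1 * ζw1 x1 x2 x4 x5 / (ξw2 x1 x2 x4 x5 * y1)) *
  e (A2 * ζw2 x1 x2 x4 x5 / (ξw1 x1 x2 x4 x5 * y2)) *
  e (-(A1 * x1 * y1) - A2 * x5 * y2) *
  F (A1 * Real.sqrt (ξw1 x1 x2 x4 x5) / (ξw2 x1 x2 x4 x5 * y1))
    (A2 * ξw2 x1 x2 x4 x5 / (ξw1 x1 x2 x4 x5 * y2)) *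
  (starRingEnd ℂ) (F (A1 * y1) (A2 * y2))

/-- The arithmetic transform `𝒥_{w0,F}(A1, A2)`. -/
def Jw0 (F : ℝ → ℝ → ℂ) (A1 A2 : ℝ) : ℂ :=
  ((A1 : ℂ) ^ 4)⁻¹ * ((A2 : ℂ) ^ 3)⁻¹ *
    ∫ y in Set.Ioi (0 : ℝ) ×ˢ Set.Ioi (0 : ℝ),
      (∫ x : ℝ × ℝ × ℝ × ℝ, Jw0Integrand F A1 A2 y.1 y.2 x.1 x.2.1 x.2.2.1 x.2.2.2) /
        ((y.1 : ℂ) * (y.2 : ℂ))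

/-! The substitution `y ↦ (n1 y1 / A1, n2 y2 / A2)` preserves the measure `dy1 dy2 / (y1 y2)`
on `(0,∞)²` and turns the integrand of `𝒥_{w0,F}(A1, A2)` into that of the left-hand side,
because `A1² / n1 = m1 c2 / c1²` and `A2² / n2 = m2 c1² / c2²`. What remains is the identity
of constants `(c1 c2)⁻¹ A1⁻⁴ A2⁻³ = m1⁻² n1⁻² (m2 n2)^(-3/2)`. -/

open Set

theorem setIntegral_Ioi_prod_Ioi_comp_mul {E : Type*} [NormedAddCommGroup E] [NormedSpace ℝ E]
    (g : ℝ × ℝ → E) {a b : ℝ} (ha : 0 < a) (hb : 0 < b) :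
    ∫ y in Ioi (0 : ℝ) ×ˢ Ioi (0 : ℝ), g (a * y.1, b * y.2) =
      (a * b)⁻¹ • ∫ y in Ioi (0 : ℝ) ×ˢ Ioi (0 : ℝ), g y := by
  set S : Set (ℝ × ℝ) := Ioi 0 ×ˢ Ioi 0
  set f : ℝ × ℝ →L[ℝ] ℝ × ℝ :=
    (ContinuousLinearMap.mul ℝ ℝ a).prodMap (ContinuousLinearMap.mul ℝ ℝ b)
  have hdet : f.det = a * b := by
    simp [f, ContinuousLinearMap.det, LinearMap.det_prodMap]
  have himage : f '' S = S := by
    ext p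
    constructor
    · rintro ⟨y, ⟨hy1, hy2⟩, rfl⟩
      exact ⟨mul_pos ha hy1, mul_pos hb hy2⟩
    · rintro ⟨hp1, hp2⟩
      refine ⟨(p.1 / a, p.2 / b), ⟨div_pos hp1 ha, div_pos hp2 hb⟩, ?_⟩
      simp [f, mul_div_cancel₀, ha.ne', hb.ne']
  have hinj : Function.Injective f := by
    intro y z h
    exact Prod.ext (mul_left_cancel₀ ha.ne' (congrArg Prod.fst h))
      (mul_left_cancel₀ hb.ne' (congrArg Prod.snd h))
  have hS : MeasurableSet S := measurableSet_Ioi.prod measurableSet_Ioi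
  have := integral_image_eq_integral_abs_det_fderiv_smul volume hS
    (fun y _ => f.hasFDerivAt.hasFDerivWithinAt) (hinj.injOn (s := S)) g
  rw [himage, hdet, abs_of_pos (mul_pos ha hb), integral_smul] at this
  rw [this, inv_smul_smul₀ (mul_pos ha hb).ne']
  rfl

theorem setIntegral_Ioi_prod_Ioi_comp_mul_div_mul (g : ℝ × ℝ → ℂ) {a b : ℝ} (ha : 0 < a)
    (hb : 0 < b) :
    ∫ y in Ioi (0 : ℝ) ×ˢ Ioi (0 : ℝ), g (a * y.1, b * y.2) / ((y.1 : ℂ) * (y.2 : ℂ)) =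
      ∫ y in Ioi (0 : ℝ) ×ˢ Ioi (0 : ℝ), g y / ((y.1 : ℂ) * (y.2 : ℂ)) := by
  have ha' : (a : ℂ) ≠ 0 := by exact_mod_cast ha.ne'
  have hb' : (b : ℂ) ≠ 0 := by exact_mod_cast hb.ne'
  calc ∫ y in Ioi (0 : ℝ) ×ˢ Ioi (0 : ℝ), g (a * y.1, b * y.2) / ((y.1 : ℂ) * (y.2 : ℂ))
      = ∫ y in Ioi (0 : ℝ) ×ˢ Ioi (0 : ℝ), ((a * b : ℝ) : ℂ) *
          (g (a * y.1, b * y.2) / (((a * y.1 : ℝ) : ℂ) * ((b * y.2 : ℝ) : ℂ))) := by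
        congr 1 with y
        push_cast
        field_simp
    _ = ((a * b : ℝ) : ℂ) * ((a * b)⁻¹ •
          ∫ y in Ioi (0 : ℝ) ×ˢ Ioi (0 : ℝ), g y / ((y.1 : ℂ) * (y.2 : ℂ))) := by
        rw [integral_const_mul,
          ← setIntegral_Ioi_prod_Ioi_comp_mul (fun y => g y / ((y.1 : ℂ) * (y.2 : ℂ))) ha hb]
    _ = ∫ y in Ioi (0 : ℝ) ×ˢ Ioi (0 : ℝ), g y / ((y.1 : ℂ) * (y.2 : ℂ)) := by
        rw [Complex.real_smul, ← mul_assoc, ← Complex.ofReal_mul,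
          mul_inv_cancel₀ (mul_pos ha hb).ne', Complex.ofReal_one, one_mul]

/-- The integrand of `𝒰_{w0,F}`, with the frequencies `A1, A2` of the phases decoupled from
the frequencies `N1, N2` of the additive character, so that the family is stable under
rescaling `y`. -/
def Uw0Integrand (F : ℝ → ℝ → ℂ) (A1 A2 N1 N2 y1 y2 x1 x2 x4 x5 : ℝ) : ℂ :=
  e (A1 * ζw1 x1 x2 x4 x5 / (ξw2 x1 x2 x4 x5 * y1)) *
  e (A2 * ζw2 x1 x2 x4 x5 / (ξw1 x1 x2 x4 x5 * y2)) *
  e (-(N1 * x1 * y1) - N2 * x5 * y2) *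
  F (A1 * Real.sqrt (ξw1 x1 x2 x4 x5) / (ξw2 x1 x2 x4 x5 * y1))
    (A2 * ξw2 x1 x2 x4 x5 / (ξw1 x1 x2 x4 x5 * y2))

theorem Jw0Integrand_mul_mul (F : ℝ → ℝ → ℂ) (A1 A2 a b y1 y2 x1 x2 x4 x5 : ℝ) :
    Jw0Integrand F A1 A2 (a * y1) (b * y2) x1 x2 x4 x5 =
      Uw0Integrand F (A1 / a) (A2 / b) (A1 * a) (A2 * b) y1 y2 x1 x2 x4 x5 *
        (starRingEnd ℂ) (F (A1 * a * y1) (A2 * b * y2)) := by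
  simp only [Jw0Integrand, Uw0Integrand]
  ring_nf

theorem Uw0Integrand_div (F : ℝ → ℝ → ℂ) (B1 C1 B2 C2 N1 N2 y1 y2 x1 x2 x4 x5 : ℝ) :
    Uw0Integrand F (B1 / C1) (B2 / C2) N1 N2 y1 y2 x1 x2 x4 x5 =
      e (B1 * ζw1 x1 x2 x4 x5 / (C1 * ξw2 x1 x2 x4 x5 * y1)) *
      e (B2 * ζw2 x1 x2 x4 x5 / (C2 * ξw1 x1 x2 x4 x5 * y2)) *
      e (-(N1 * x1 * y1) - N2 * x5 * y2) *
      F (B1 * Real.sqrt (ξw1 x1 x2 x4 x5) / (C1 * ξw2 x1 x2 x4 x5 * y1))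
        (B2 * ξw2 x1 x2 x4 x5 / (C2 * ξw1 x1 x2 x4 x5 * y2)) := by
  simp only [Uw0Integrand]
  ring_nf

theorem rpow_neg_two_mul_rpow_neg_three_halves_eq {m1 m2 n1 n2 c1 c2 A1 A2 : ℝ}
    (hm1 : 0 ≤ m1) (hm2 : 0 ≤ m2) (hn1 : 0 ≤ n1) (hn2 : 0 ≤ n2)
    (hc1 : 0 < c1) (hc2 : 0 < c2) (hA1 : 0 < A1) (hA2 : 0 < A2)
    (hA1sq : A1 ^ 2 * c1 ^ 2 = m1 * n1 * c2) (hA2sq : A2 ^ 2 * c2 ^ 2 = m2 * n2 * c1 ^ 2) :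
    m1 ^ (-2 : ℝ) * m2 ^ (-(3/2) : ℝ) * n1 ^ (-2 : ℝ) * n2 ^ (-(3/2) : ℝ) =
      (c1 * c2)⁻¹ * ((A1 ^ 4)⁻¹ * (A2 ^ 3)⁻¹) := by
  have hmn1 : m1 * n1 = A1 ^ 2 * c1 ^ 2 / c2 := by field_simp; linarith
  have hmn2 : m2 * n2 = (A2 * c2 / c1) ^ 2 := by field_simp; linarith
  have h1 : m1 ^ (-2 : ℝ) * n1 ^ (-2 : ℝ) = ((m1 * n1) ^ 2)⁻¹ := by
    rw [← Real.mul_rpow hm1 hn1, Real.rpow_neg (by positivity), Real.rpow_two]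
  have h2 : m2 ^ (-(3/2) : ℝ) * n2 ^ (-(3/2) : ℝ) = ((A2 * c2 / c1) ^ 3)⁻¹ := by
    rw [← Real.mul_rpow hm2 hn2, hmn2, ← Real.rpow_two, ← Real.rpow_mul (by positivity),
      show (2 : ℝ) * -(3/2) = -(3 : ℕ) by norm_num, Real.rpow_neg (by positivity),
      Real.rpow_natCast]
  calc m1 ^ (-2 : ℝ) * m2 ^ (-(3/2) : ℝ) * n1 ^ (-2 : ℝ) * n2 ^ (-(3/2) : ℝ)
      = (m1 ^ (-2 : ℝ) * n1 ^ (-2 : ℝ)) * (m2 ^ (-(3/2) : ℝ) * n2 ^ (-(3/2) : ℝ)) := by ring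
    _ = (c1 * c2)⁻¹ * ((A1 ^ 4)⁻¹ * (A2 ^ 3)⁻¹) := by
      rw [h1, h2, hmn1]
      field_simp

theorem pow_mul_pow_mul_mul_zpow_neg_div {K : Type*} [Field K] (u v z w : K) (k l : ℕ) :
    u ^ k * v ^ l * z * w * (u ^ (-(k : ℤ)) * v ^ (-(l : ℤ))) / (u * v) = z * w / (u * v) := by
  rcases eq_or_ne u 0 with rfl | hu
  · simp
  rcases eq_or_ne v 0 with rfl | hv
  · simp
  rw [zpow_neg, zpow_neg, zpow_natCast, zpow_natCast]
  field_simp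

theorem kuznetsov_integral_w0_general (F : ℝ → ℝ → ℂ)
    (m1 m2 n1 n2 c1 c2 : ℕ) (hm1 : 0 < m1) (hm2 : 0 < m2) (hn1 : 0 < n1)
    (hn2 : 0 < n2) (hc1 : 0 < c1) (hc2 : 0 < c2)
    (A1 A2 : ℝ)
    (hA1 : A1 = Real.sqrt ((m1 * n1 * c2 : ℕ) : ℝ) / (c1 : ℝ))
    (hA2 : A2 = Real.sqrt ((m2 * n2 : ℕ) : ℝ) * (c1 : ℝ) / (c2 : ℝ)) :
    (((m1 : ℝ) ^ (-2 : ℝ) * (m2 : ℝ) ^ (-(3/2) : ℝ) * (n1 : ℝ) ^ (-2 : ℝ) *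
        (n2 : ℝ) ^ (-(3/2) : ℝ) : ℝ) : ℂ) *
      ∫ y in Set.Ioi (0 : ℝ) ×ˢ Set.Ioi (0 : ℝ),
        ((y.1 : ℂ) ^ 4 * (y.2 : ℂ) ^ 3 *
          ∫ x : ℝ × ℝ × ℝ × ℝ,
            e ((m1 : ℝ) * (c2 : ℝ) * ζw1 x.1 x.2.1 x.2.2.1 x.2.2.2 /
                ((c1 : ℝ) ^ 2 * ξw2 x.1 x.2.1 x.2.2.1 x.2.2.2 * y.1)) *
            e ((m2 : ℝ) * (c1 : ℝ) ^ 2 * ζw2 x.1 x.2.1 x.2.2.1 x.2.2.2 /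
                ((c2 : ℝ) ^ 2 * ξw1 x.1 x.2.1 x.2.2.1 x.2.2.2 * y.2)) *
            e (-((n1 : ℝ) * x.1 * y.1) - (n2 : ℝ) * x.2.2.2 * y.2) *
            F ((m1 : ℝ) * (c2 : ℝ) * Real.sqrt (ξw1 x.1 x.2.1 x.2.2.1 x.2.2.2) /
                ((c1 : ℝ) ^ 2 * ξw2 x.1 x.2.1 x.2.2.1 x.2.2.2 * y.1))
              ((m2 : ℝ) * (c1 : ℝ) ^ 2 * ξw2 x.1 x.2.1 x.2.2.1 x.2.2.2 /
                ((c2 : ℝ) ^ 2 * ξw1 x.1 x.2.1 x.2.2.1 x.2.2.2 * y.2))) *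
        (starRingEnd ℂ) (F ((n1 : ℝ) * y.1) ((n2 : ℝ) * y.2)) *
        ((y.1 : ℂ) ^ (-4 : ℤ) * (y.2 : ℂ) ^ (-3 : ℤ)) / ((y.1 : ℂ) * (y.2 : ℂ))
      = ((c1 * c2 : ℕ) : ℂ)⁻¹ * Jw0 F A1 A2 := by
  have hA1sq : A1 ^ 2 * c1 ^ 2 = m1 * n1 * c2 := by
    rw [hA1, div_pow, div_mul_cancel₀ _ (by positivity), Real.sq_sqrt (by positivity)]
    push_cast; ring
  have hA2sq : A2 ^ 2 * c2 ^ 2 = m2 * n2 * c1 ^ 2 := by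
    rw [hA2, div_pow, div_mul_cancel₀ _ (by positivity), mul_pow, Real.sq_sqrt (by positivity)]
    push_cast; ring
  have hA1pos : 0 < A1 := by rw [hA1]; positivity
  have hA2pos : 0 < A2 := by rw [hA2]; positivity
  set a : ℝ := n1 / A1 with ha
  set b : ℝ := n2 / A2 with hb
  have hN1 : A1 * a = n1 := by rw [ha]; field_simp
  have hN2 : A2 * b = n2 := by rw [hb]; field_simp
  have hB1 : A1 / a = m1 * c2 / c1 ^ 2 := by rw [ha]; field_simp; linarith
  have hB2 : A2 / b = m2 * c1 ^ 2 / c2 ^ 2 := by rw [hb]; field_simp; linarith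
  rw [Jw0]
  conv_rhs => rw [← setIntegral_Ioi_prod_Ioi_comp_mul_div_mul _ (by positivity : 0 < a)
    (by positivity : 0 < b)]
  simp only [Jw0Integrand_mul_mul, hB1, hB2, hN1, hN2, Uw0Integrand_div, integral_mul_const]
  rw [rpow_neg_two_mul_rpow_neg_three_halves_eq (Nat.cast_nonneg m1) (Nat.cast_nonneg m2)
    (Nat.cast_nonneg n1) (Nat.cast_nonneg n2) (by positivity) (by positivity) hA1pos hA2pos
    hA1sq hA2sq]
  push_cast
  rw [mul_assoc]
  congr 3 with y
  exact pow_mul_pow_mul_mul_zpow_neg_div _ _ _ _ 4 3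

/-- the Kuznetsov integral identity for the long Weyl element `w0`. -/
theorem kuznetsov_integral_w0 (F : ℝ → ℝ → ℂ)
    (hFc : Continuous fun p : ℝ × ℝ => F p.1 p.2)
    (hFs : HasCompactSupport fun p : ℝ × ℝ => F p.1 p.2)
    (hFsub : tsupport (fun p : ℝ × ℝ => F p.1 p.2) ⊆ Set.Ioi 0 ×ˢ Set.Ioi 0)
    (m1 m2 n1 n2 c1 c2 : ℕ) (hm1 : 0 < m1) (hm2 : 0 < m2) (hn1 : 0 < n1)
    (hn2 : 0 < n2) (hc1 : 0 < c1) (hc2 : 0 < c2)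
    (A1 A2 : ℝ)
    (hA1 : A1 = Real.sqrt ((m1 * n1 * c2 : ℕ) : ℝ) / (c1 : ℝ))
    (hA2 : A2 = Real.sqrt ((m2 * n2 : ℕ) : ℝ) * (c1 : ℝ) / (c2 : ℝ)) :
    (((m1 : ℝ) ^ (-2 : ℝ) * (m2 : ℝ) ^ (-(3/2) : ℝ) * (n1 : ℝ) ^ (-2 : ℝ) *
        (n2 : ℝ) ^ (-(3/2) : ℝ) : ℝ) : ℂ) *
      ∫ y in Set.Ioi (0 : ℝ) ×ˢ Set.Ioi (0 : ℝ),
        ((y.1 : ℂ) ^ 4 * (y.2 : ℂ) ^ 3 *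
          ∫ x : ℝ × ℝ × ℝ × ℝ,
            e ((m1 : ℝ) * (c2 : ℝ) * ζw1 x.1 x.2.1 x.2.2.1 x.2.2.2 /
                ((c1 : ℝ) ^ 2 * ξw2 x.1 x.2.1 x.2.2.1 x.2.2.2 * y.1)) *
            e ((m2 : ℝ) * (c1 : ℝ) ^ 2 * ζw2 x.1 x.2.1 x.2.2.1 x.2.2.2 /
                ((c2 : ℝ) ^ 2 * ξw1 x.1 x.2.1 x.2.2.1 x.2.2.2 * y.2)) *
            e (-((n1 : ℝ) * x.1 * y.1) - (n2 : ℝ) * x.2.2.2 * y.2) *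
            F ((m1 : ℝ) * (c2 : ℝ) * Real.sqrt (ξw1 x.1 x.2.1 x.2.2.1 x.2.2.2) /
                ((c1 : ℝ) ^ 2 * ξw2 x.1 x.2.1 x.2.2.1 x.2.2.2 * y.1))
              ((m2 : ℝ) * (c1 : ℝ) ^ 2 * ξw2 x.1 x.2.1 x.2.2.1 x.2.2.2 /
                ((c2 : ℝ) ^ 2 * ξw1 x.1 x.2.1 x.2.2.1 x.2.2.2 * y.2))) *
        (starRingEnd ℂ) (F ((n1 : ℝ) * y.1) ((n2 : ℝ) * y.2)) *
        ((y.1 : ℂ) ^ (-4 : ℤ) * (y.2 : ℂ) ^ (-3 : ℤ)) / ((y.1 : ℂ) * (y.2 : ℂ))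
      = ((c1 * c2 : ℕ) : ℂ)⁻¹ * Jw0 F A1 A2 :=
  kuznetsov_integral_w0_general F m1 m2 n1 n2 c1 c2 hm1 hm2 hn1 hn2 hc1 hc2 A1 A2 hA1 hA2

end
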